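/- arXiv:1407.2172 — 3 statements merged into one kernel-verified Lean document; each statement's English description precedes it below -/
import Mathlib

section
/- Let A be a positive self-adjoint operator on a Hilbert space H with spectrum bounded below by μ₁ > 0, and let B* : H → U be a bounded operator with β := (1/2)‖B*‖². If λ ∈ ℂ and u ∈ D(A), u ≠ 0, satisfy λ²u + λ B B* u + A u = 0, and λ is not real, then -β ≤ Re(λ) ≤ 0 and |λ|² ≥ μ₁. -/
open scoped ComplexInnerProductSpace

/-! Pair the eigenvalue equation with `u`: with `a = ‖u‖²`, `b = ‖B*u‖²` and `c = ⟪Au, u⟫`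
(real by symmetry of `A`), `λ` is a non-real root of the real quadratic `a z² + b z + c`.
Its roots are then `λ` and `conj λ`, so Vieta gives `2 Re λ · a = -b` and `|λ|² · a = c`.
The bounds follow from `0 ≤ b ≤ ‖B*‖² a = 2β a` and `c ≥ μ₁ a`. -/

namespace Complex

variable {a b c : ℝ} {z : ℂ}

theorem two_mul_re_mul_add_eq_zero_of_quadratic_eq_zero (hz : z.im ≠ 0)
    (h : z ^ 2 * a + z * b + c = 0) : 2 * z.re * a + b = 0 := by
  have him : z.im * (2 * z.re * a + b) = 0 := by
    have h' := congrArg im h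
    simp only [pow_two, add_im, mul_im, mul_re, ofReal_re, ofReal_im, zero_im] at h'
    linear_combination h'
  exact (mul_eq_zero.mp him).resolve_left hz

theorem sq_norm_mul_eq_of_quadratic_eq_zero (hz : z.im ≠ 0)
    (h : z ^ 2 * a + z * b + c = 0) : ‖z‖ ^ 2 * a = c := by
  have hsum := two_mul_re_mul_add_eq_zero_of_quadratic_eq_zero hz h
  have hre : (z.re * z.re - z.im * z.im) * a + z.re * b + c = 0 := by
    simpa [pow_two] using congrArg re h
  rw [Complex.sq_norm, normSq_apply]
  linear_combination z.re * hsum - hre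

end Complex

section

variable {H U : Type*} [NormedAddCommGroup H] [InnerProductSpace ℂ H]
  [NormedAddCommGroup U] [InnerProductSpace ℂ U]

theorem inner_self_apply_eq_re_of_symm {D : Submodule ℂ H} {A : D →ₗ[ℂ] H}
    (hsym : ∀ u v : D, ⟪A u, (v : H)⟫ = ⟪(u : H), A v⟫) (u : D) :
    ⟪(u : H), A u⟫ = ((⟪A u, (u : H)⟫ : ℂ).re : ℂ) := by
  have hconj : (starRingEnd ℂ) ⟪A u, (u : H)⟫ = ⟪A u, (u : H)⟫ := by
    rw [inner_conj_symm, hsym]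
  rw [← hsym, Complex.conj_eq_iff_re.mp hconj]

variable [CompleteSpace H] [CompleteSpace U]

theorem inner_self_apply_adjoint_eq_sq_norm (B : U →L[ℂ] H) (u : H) :
    ⟪u, B (B.adjoint u)⟫ = ((‖B.adjoint u‖ ^ 2 : ℝ) : ℂ) := by
  rw [← ContinuousLinearMap.adjoint_inner_left, inner_self_eq_norm_sq_to_K]
  norm_cast

theorem sq_norm_adjoint_apply_le (B : U →L[ℂ] H) (u : H) :
    ‖B.adjoint u‖ ^ 2 ≤ ‖B.adjoint‖ ^ 2 * ‖u‖ ^ 2 := by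
  rw [← mul_pow]
  exact pow_le_pow_left₀ (norm_nonneg _) (B.adjoint.le_opNorm u) 2

end

theorem nonreal_eigenvalues_location_general
    {H U : Type*} [NormedAddCommGroup H] [InnerProductSpace ℂ H] [CompleteSpace H]
    [NormedAddCommGroup U] [InnerProductSpace ℂ U] [CompleteSpace U]
    (D : Submodule ℂ H) (A : D →ₗ[ℂ] H)
    (hsym : ∀ u v : D, ⟪A u, (v : H)⟫ = ⟪(u : H), A v⟫)
    (μ₁ : ℝ)
    (hpos : ∀ u : D, μ₁ * ‖(u : H)‖ ^ 2 ≤ (⟪A u, (u : H)⟫ : ℂ).re)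
    (B : U →L[ℂ] H) (β : ℝ) (hβ : β = (1 / 2) * ‖B.adjoint‖ ^ 2)
    (lam : ℂ) (u : D) (hu : (u : H) ≠ 0)
    (heq : lam ^ 2 • (u : H) + lam • B (B.adjoint (u : H)) + A u = 0)
    (hnr : lam.im ≠ 0) :
    -β ≤ lam.re ∧ lam.re ≤ 0 ∧ μ₁ ≤ ‖lam‖ ^ 2 := by
  have hquad : lam ^ 2 * ((‖(u : H)‖ ^ 2 : ℝ) : ℂ) + lam * ((‖B.adjoint (u : H)‖ ^ 2 : ℝ) : ℂ)
      + (((⟪A u, (u : H)⟫ : ℂ).re : ℝ) : ℂ) = 0 := by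
    have h := congrArg (fun v => ⟪(u : H), v⟫) heq
    simp only [inner_add_right, inner_smul_right, inner_zero_right, inner_self_eq_norm_sq_to_K,
      inner_self_apply_adjoint_eq_sq_norm, inner_self_apply_eq_re_of_symm hsym] at h
    exact_mod_cast h
  have hsum := Complex.two_mul_re_mul_add_eq_zero_of_quadratic_eq_zero hnr hquad
  have hprod := Complex.sq_norm_mul_eq_of_quadratic_eq_zero hnr hquad
  have ha : 0 < ‖(u : H)‖ ^ 2 := by positivity
  have hb := sq_norm_adjoint_apply_le B (u : H)
  refine ⟨?_, ?_, ?_⟩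
  · nlinarith
  · nlinarith [sq_nonneg ‖B.adjoint (u : H)‖]
  · nlinarith [hpos u]

/-- Non-real eigenvalues of the quadratic pencil `λ²u + λBB*u + Au = 0` associated to the
damped equation `ẍ + Ax + BB*ẋ = 0` lie in the strip `-β ≤ Re λ ≤ 0`, `|λ|² ≥ μ₁`,
where `β = ½‖B*‖²` and `μ₁ > 0` is a lower bound of the positive operator `A`. -/
theorem nonreal_eigenvalues_location
    {H U : Type*} [NormedAddCommGroup H] [InnerProductSpace ℂ H] [CompleteSpace H]
    [NormedAddCommGroup U] [InnerProductSpace ℂ U] [CompleteSpace U]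
    (D : Submodule ℂ H) (A : D →ₗ[ℂ] H)
    (hsym : ∀ u v : D, ⟪A u, (v : H)⟫ = ⟪(u : H), A v⟫)
    (μ₁ : ℝ) (hμ₁ : 0 < μ₁)
    (hpos : ∀ u : D, μ₁ * ‖(u : H)‖ ^ 2 ≤ (⟪A u, (u : H)⟫ : ℂ).re)
    (B : U →L[ℂ] H) (β : ℝ) (hβ : β = (1 / 2) * ‖B.adjoint‖ ^ 2)
    (lam : ℂ) (u : D) (hu : (u : H) ≠ 0)
    (heq : lam ^ 2 • (u : H) + lam • B (B.adjoint (u : H)) + A u = 0)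
    (hnr : lam.im ≠ 0) :
    -β ≤ lam.re ∧ lam.re ≤ 0 ∧ μ₁ ≤ ‖lam‖ ^ 2 :=
  nonreal_eigenvalues_location_general D A hsym μ₁ hpos B β hβ lam u hu heq hnr
end

section
/- Let A be a positive self-adjoint operator on a Hilbert space H with first eigenvalue μ₁ > 0 and B* : H → U bounded with β := (1/2)‖B*‖². If λ is a real number and u ∈ D(A), u ≠ 0, satisfy λ²u + λ B B* u + A u = 0, then λ lies in the interval [-β - (β² - μ₁)₊^{1/2}, (β² - μ₁)₊^{1/2}], where (γ)₊ = max(γ, 0). -/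
open scoped ComplexInnerProductSpace

private lemma aux_quadratic_bound (n b a β μ₁ s lam : ℝ) (hn : 0 < n) (hb : 0 ≤ b)
    (hb2 : b ≤ 2 * β * n ^ 2) (ha : μ₁ * n ^ 2 ≤ a) (hμ₁ : 0 < μ₁) (hs : 0 ≤ s)
    (hs2' : β ^ 2 - μ₁ ≤ s ^ 2) (key : lam ^ 2 * n ^ 2 + lam * b + a = 0) :
    -β - s ≤ lam ∧ lam ≤ s := by
  have hnn : (0:ℝ) < n ^ 2 := pow_pos hn 2
  have hlam : lam < 0 := by
    by_contra h
    push_neg at h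
    nlinarith [mul_nonneg h hb, mul_pos hμ₁ hnn, sq_nonneg (lam * n)]
  refine ⟨?_, by linarith⟩
  by_contra h
  push_neg at h
  have h1 : 0 ≤ (-lam) * (2 * β * n ^ 2 - b) :=
    mul_nonneg (by linarith) (by linarith)
  have h5 : n ^ 2 * (lam ^ 2 + 2 * β * lam + μ₁) ≤ 0 := by nlinarith [key, ha, h1]
  have hq : lam ^ 2 + 2 * β * lam + μ₁ ≤ 0 := by
    by_contra hc
    push_neg at hc
    nlinarith [mul_pos hnn hc]
  have hsq : (lam + β) ^ 2 ≤ s ^ 2 := by nlinarith [hq, hs2']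
  have h2 : (0:ℝ) < s - (lam + β) := by linarith
  nlinarith [mul_pos h2 (show (0:ℝ) < -(s + (lam + β)) by linarith)]

/-- Real eigenvalues of the quadratic pencil `λ²u + λBB*u + Au = 0` lie in the interval
`[-β - (β² - μ₁)₊^{1/2}, (β² - μ₁)₊^{1/2}]`, where `β = ½‖B*‖²` and `μ₁ > 0` is a lower
bound of the positive operator `A`. -/
theorem real_eigenvalues_location
    {H U : Type*} [NormedAddCommGroup H] [InnerProductSpace ℂ H] [CompleteSpace H]
    [NormedAddCommGroup U] [InnerProductSpace ℂ U] [CompleteSpace U]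
    (D : Submodule ℂ H) (A : D →ₗ[ℂ] H)
    (hsym : ∀ u v : D, ⟪A u, (v : H)⟫ = ⟪(u : H), A v⟫)
    (μ₁ : ℝ) (hμ₁ : 0 < μ₁)
    (hpos : ∀ u : D, μ₁ * ‖(u : H)‖ ^ 2 ≤ (⟪A u, (u : H)⟫ : ℂ).re)
    (B : U →L[ℂ] H) (β : ℝ) (hβ : β = (1 / 2) * ‖B.adjoint‖ ^ 2)
    (lam : ℝ) (u : D) (hu : (u : H) ≠ 0)
    (heq : (lam : ℂ) ^ 2 • (u : H) + (lam : ℂ) • B (B.adjoint (u : H)) + A u = 0) :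
    lam ∈ Set.Icc (-β - Real.sqrt (max (β ^ 2 - μ₁) 0)) (Real.sqrt (max (β ^ 2 - μ₁) 0)) := by
  set n : ℝ := ‖(u : H)‖ with hn_def
  have hn : 0 < n := norm_pos_iff.mpr hu
  set b : ℝ := ‖B.adjoint (u : H)‖ ^ 2 with hb_def
  have hb : 0 ≤ b := sq_nonneg _
  have hBn : ‖B.adjoint (u : H)‖ ≤ ‖B.adjoint‖ * n := B.adjoint.le_opNorm _
  have hb2 : b ≤ 2 * β * n ^ 2 := by
    have h0 : (0:ℝ) ≤ ‖B.adjoint (u : H)‖ := norm_nonneg _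
    have h1 : (0:ℝ) ≤ ‖B.adjoint‖ := norm_nonneg _
    nlinarith
  set a : ℝ := (⟪A u, (u : H)⟫ : ℂ).re with ha_def
  have ha : μ₁ * n ^ 2 ≤ a := hpos u
  -- key real identity
  have h0 : (⟪((lam : ℂ) ^ 2 • (u : H) + (lam : ℂ) • B (B.adjoint (u : H)) + A u : H),
      (u : H)⟫ : ℂ) = 0 := by rw [heq]; simp
  have hBB : (⟪(B (B.adjoint (u : H)) : H), (u : H)⟫ : ℂ) = (b : ℂ) := by
    have := ContinuousLinearMap.adjoint_inner_right B (B.adjoint (u : H)) (u : H)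
    rw [← this, inner_self_eq_norm_sq_to_K]
    norm_cast
  rw [inner_add_left, inner_add_left, inner_smul_left, inner_smul_left, hBB,
    inner_self_eq_norm_sq_to_K] at h0
  have key : lam ^ 2 * n ^ 2 + lam * b + a = 0 := by
    have := congrArg Complex.re h0
    simp [← Complex.ofReal_pow, Complex.ofReal_re, Complex.ofReal_im] at this
    linarith
  set s : ℝ := Real.sqrt (max (β ^ 2 - μ₁) 0) with hs_def
  have hs : 0 ≤ s := Real.sqrt_nonneg _
  have hs2 : s ^ 2 = max (β ^ 2 - μ₁) 0 := Real.sq_sqrt (le_max_right _ _)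
  have hs2' : β ^ 2 - μ₁ ≤ s ^ 2 := hs2 ▸ le_max_left _ _
  exact aux_quadratic_bound n b a β μ₁ s lam hn hb hb2 ha hμ₁ hs hs2' key
end

section
/- Let (Vₙ)_{n} be an orthonormal basis of a Hilbert space ℋ and (φₙ) a family with ‖φₙ - Vₙ‖ ≤ εₙ where (εₙ) ∈ ℓ². If the linear span of (φₙ) is dense in ℋ and the εₙ are small enough that the family is ω-linearly independent, then (φₙ) is a Riesz basis of ℋ: there exists a bounded invertible operator Φ on ℋ with Φ Vₙ = φₙ for all n. -/
/-!
Write `φₙ = Vₙ + Dₙ` with `∑ ‖Dₙ‖² < ∞`. The operator `T x = ∑ ⟪Vₙ, x⟫ Dₙ` is bounded, with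
`‖∑_{n ∈ s} ⟪Vₙ, ·⟫ Dₙ‖ ≤ (∑_{n ∈ s} ‖Dₙ‖²)^{1/2}` by Cauchy–Schwarz and Bessel, so it is the
operator-norm limit of its finite-rank partial sums and hence compact; `1 + T` sends `Vₙ` to
`φₙ`. Expanding `x` in the basis `(Vₙ)`, `(1 + T) x = ∑ ⟪Vₙ, x⟫ φₙ`, so ω-linear independence
makes `1 + T` injective, and by the Fredholm alternative an injective compact perturbation of the
identity is invertible.
-/

open ContinuousLinearMap
open scoped InnerProductSpace

theorem IsCompactOperator.isUnit_one_add_of_injective {𝕜 X : Type*} [NontriviallyNormedField 𝕜]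
    [NormedAddCommGroup X] [NormedSpace 𝕜 X] [CompleteSpace X] {T : X →L[𝕜] X}
    (hT : IsCompactOperator T) (hinj : Function.Injective ⇑(1 + T)) : IsUnit (1 + T) := by
  have hnot : ¬ Module.End.HasEigenvalue (T : Module.End 𝕜 X) (-1) := by
    intro h
    obtain ⟨x, hx⟩ := h.exists_hasEigenvector
    refine hx.2 (hinj ?_)
    have hTx : T x = -x := by simpa using hx.apply_eq_smul
    simp [hTx]
  have := (hT.hasEigenvalue_or_mem_resolventSet (neg_ne_zero.mpr one_ne_zero)).resolve_left hnot
  rw [spectrum.mem_resolventSet_iff, ← IsUnit.neg_iff] at this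
  simpa [add_comm] using this

def OmegaLinearIndependent (R : Type*) {ι M : Type*} [Semiring R] [AddCommMonoid M]
    [TopologicalSpace M] [Module R M] (v : ι → M) : Prop :=
  ∀ c : ι → R, HasSum (fun i => c i • v i) 0 → ∀ i, c i = 0

/-- `x ↦ ∑ ⟪V i, x⟫ • D i`, as a sum in operator norm: it is junk (`0`) unless the rank-one
terms are summable, which holds for orthonormal `V` and `∑ ‖D i‖² < ∞`. -/
noncomputable def hilbertSchmidtOp (𝕜 : Type*) {ι H : Type*} [RCLike 𝕜] [NormedAddCommGroup H]
    [InnerProductSpace 𝕜 H] (V D : ι → H) : H →L[𝕜] H :=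
  ∑' i, (toSpanSingleton 𝕜 (D i)).comp (innerSL 𝕜 (V i))

namespace Orthonormal

variable {𝕜 ι H : Type*} [RCLike 𝕜] [NormedAddCommGroup H] [InnerProductSpace 𝕜 H]
  {V D : ι → H}

theorem norm_sum_inner_smul_le (hV : Orthonormal 𝕜 V) (s : Finset ι) (x : H) :
    ‖∑ i ∈ s, ⟪V i, x⟫_𝕜 • D i‖ ≤ √(∑ i ∈ s, ‖D i‖ ^ 2) * ‖x‖ := by
  have hBessel : √(∑ i ∈ s, ‖⟪V i, x⟫_𝕜‖ ^ 2) ≤ ‖x‖ :=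
    Real.sqrt_le_iff.mpr ⟨norm_nonneg x, hV.sum_inner_products_le x⟩
  calc ‖∑ i ∈ s, ⟪V i, x⟫_𝕜 • D i‖ ≤ ∑ i ∈ s, ‖⟪V i, x⟫_𝕜‖ * ‖D i‖ :=
        norm_sum_le_of_le s fun i _ => (norm_smul _ _).le
    _ ≤ √(∑ i ∈ s, ‖⟪V i, x⟫_𝕜‖ ^ 2) * √(∑ i ∈ s, ‖D i‖ ^ 2) :=
        Real.sum_mul_le_sqrt_mul_sqrt s _ _
    _ ≤ √(∑ i ∈ s, ‖D i‖ ^ 2) * ‖x‖ := by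
        rw [mul_comm]
        gcongr

theorem norm_sum_rankOne_le (hV : Orthonormal 𝕜 V) (s : Finset ι) :
    ‖∑ i ∈ s, (toSpanSingleton 𝕜 (D i)).comp (innerSL 𝕜 (V i))‖ ≤ √(∑ i ∈ s, ‖D i‖ ^ 2) :=
  opNorm_le_bound _ (Real.sqrt_nonneg _) fun x => by
    simpa using hV.norm_sum_inner_smul_le (D := D) s x

variable [CompleteSpace H]

theorem summable_rankOne (hV : Orthonormal 𝕜 V) (hD : Summable fun i => ‖D i‖ ^ 2) :
    Summable fun i => (toSpanSingleton 𝕜 (D i)).comp (innerSL 𝕜 (V i)) := by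
  refine summable_iff_vanishing_norm.mpr fun ε hε => ?_
  obtain ⟨s, hs⟩ := summable_iff_vanishing_norm.mp hD (ε ^ 2) (by positivity)
  refine ⟨s, fun t ht => (hV.norm_sum_rankOne_le t).trans_lt ?_⟩
  exact (Real.sqrt_lt' hε).mpr ((le_abs_self _).trans_lt (hs t ht))

theorem hasSum_hilbertSchmidtOp_apply (hV : Orthonormal 𝕜 V)
    (hD : Summable fun i => ‖D i‖ ^ 2) (x : H) :
    HasSum (fun i => ⟪V i, x⟫_𝕜 • D i) (hilbertSchmidtOp 𝕜 V D x) := by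
  simpa [hilbertSchmidtOp] using (hV.summable_rankOne hD).hasSum.mapL (apply 𝕜 H x)

theorem hilbertSchmidtOp_apply_self (hV : Orthonormal 𝕜 V)
    (hD : Summable fun i => ‖D i‖ ^ 2) (i : ι) : hilbertSchmidtOp 𝕜 V D (V i) = D i := by
  classical
  refine (hV.hasSum_hilbertSchmidtOp_apply hD (V i)).unique ?_
  convert hasSum_ite_eq i (D i) using 2 with j
  rw [orthonormal_iff_ite.mp hV j i]
  split_ifs with hji
  · simp [hji]
  · simp

theorem isCompactOperator_hilbertSchmidtOp (hV : Orthonormal 𝕜 V)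
    (hD : Summable fun i => ‖D i‖ ^ 2) : IsCompactOperator (hilbertSchmidtOp 𝕜 V D) :=
  isCompactOperator_of_tendsto (hV.summable_rankOne hD).hasSum <| .of_forall fun _ =>
    Submodule.sum_mem (compactOperator (RingHom.id 𝕜) H H) fun i _ =>
      (isCompactOperator_of_locallyCompactSpace_dom (innerSL 𝕜 (V i))).clm_comp
        (toSpanSingleton 𝕜 (D i))

end Orthonormal

theorem HilbertBasis.injective_one_add_of_omegaLinearIndependent {𝕜 ι H : Type*} [RCLike 𝕜]
    [NormedAddCommGroup H] [InnerProductSpace 𝕜 H] (b : HilbertBasis ι 𝕜 H) {φ : ι → H}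
    {T : H →L[𝕜] H} (hT : ∀ x, HasSum (fun i => ⟪b i, x⟫_𝕜 • (φ i - b i)) (T x))
    (hφ : OmegaLinearIndependent 𝕜 φ) : Function.Injective ⇑(1 + T) := by
  refine (injective_iff_map_eq_zero _).mpr fun x hx => ?_
  have hsum : HasSum (fun i => ⟪b i, x⟫_𝕜 • φ i) 0 := by
    have := (b.hasSum_repr x).add (hT x)
    simp only [b.repr_apply_apply, ← smul_add, add_sub_cancel] at this
    rwa [← hx]
  have hc := hφ _ hsum
  have := b.hasSum_repr x
  simp only [b.repr_apply_apply, hc, zero_smul] at this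
  exact this.unique hasSum_zero

theorem riesz_basis_of_quadratically_close_general
    {H : Type*} [NormedAddCommGroup H] [InnerProductSpace ℂ H] [CompleteSpace H]
    (V : ℕ → H) (hON : Orthonormal ℂ V)
    (htot : (Submodule.span ℂ (Set.range V)).topologicalClosure = ⊤)
    (φ : ℕ → H) (ε : ℕ → ℝ)
    (hclose : ∀ n, ‖φ n - V n‖ ≤ ε n)
    (hε : Summable (fun n => (ε n) ^ 2))
    (homega : ∀ c : ℕ → ℂ, HasSum (fun n => c n • φ n) 0 → ∀ n, c n = 0) :
    ∃ Φ : H ≃L[ℂ] H, ∀ n, Φ (V n) = φ n := by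
  obtain ⟨b, rfl⟩ : ∃ b : HilbertBasis ℕ ℂ H, ⇑b = V :=
    ⟨HilbertBasis.mk hON htot.ge, HilbertBasis.coe_mk _ _⟩
  have hD : Summable fun n => ‖φ n - b n‖ ^ 2 :=
    hε.of_nonneg_of_le (fun n => by positivity) fun n =>
      pow_le_pow_left₀ (norm_nonneg _) (hclose n) 2
  set T := hilbertSchmidtOp ℂ b (fun n => φ n - b n)
  have hinj : Function.Injective ⇑(1 + T) :=
    b.injective_one_add_of_omegaLinearIndependent (hON.hasSum_hilbertSchmidtOp_apply hD) homega
  have hunit : IsUnit (1 + T) :=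
    (hON.isCompactOperator_hilbertSchmidtOp hD).isUnit_one_add_of_injective hinj
  refine ⟨.ofUnit hunit.unit, fun n => ?_⟩
  show (1 + T) (b n) = φ n
  rw [add_apply, one_apply_eq_self, hON.hilbertSchmidtOp_apply_self hD, add_sub_cancel]

/-- Bari's theorem: a family `(φₙ)` that is quadratically close to an orthonormal basis
`(Vₙ)`, complete, and ω-linearly independent, is a Riesz basis: it is the image of `(Vₙ)`
under a bounded invertible operator. -/
theorem riesz_basis_of_quadratically_close
    {H : Type*} [NormedAddCommGroup H] [InnerProductSpace ℂ H] [CompleteSpace H]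
    (V : ℕ → H) (hON : Orthonormal ℂ V)
    (htot : (Submodule.span ℂ (Set.range V)).topologicalClosure = ⊤)
    (φ : ℕ → H) (ε : ℕ → ℝ)
    (hclose : ∀ n, ‖φ n - V n‖ ≤ ε n)
    (hε : Summable (fun n => (ε n) ^ 2))
    (hdense : (Submodule.span ℂ (Set.range φ)).topologicalClosure = ⊤)
    (homega : ∀ c : ℕ → ℂ, HasSum (fun n => c n • φ n) 0 → ∀ n, c n = 0) :
    ∃ Φ : H ≃L[ℂ] H, ∀ n, Φ (V n) = φ n :=
  riesz_basis_of_quadratically_close_general V hON htot φ ε hclose hε homega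
end
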